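/- For every t ∈ ℂ with Re(t) > 0 and every real γ > 0, the integral below converges and χ(γt) = (μ³·t²/(1 + μ²)) · ∫₀^∞ μ^{−4·⟨log_{μ⁴}(s/γ)⟩} · s · exp((μ − 1/μ)·t·s) ds. -/

import Mathlib

/-!
For `s > 0` the weight satisfies `μ^{-4⟨log_{μ⁴}(s/γ)⟩} · s = γ μ^{4k}` with
`k = ⌊log_{μ⁴}(s/γ)⌋`: it rounds `s` up to the grid `γ μ^{4ℤ}`. So on each cell
`(γ μ^{4(k+1)}, γ μ^{4k}]` the integrand is `γ μ^{4k} e^{cs}` with `c = (μ - 1/μ) t`, whose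
integral is `(g k - μ^{-4} g (k+1)) / c` for `g k = γ μ^{4k} e^{c γ μ^{4k}}`. Summing over
`k ∈ ℤ` and reindexing gives `(1 - μ^{-4}) / c · ∑ g`, while `χ(γt) = t ∑ g`; the prefactor
`μ³t²/(1+μ²)` is exactly `t c / (1 - μ^{-4})`.
-/

open Complex Set Filter MeasureTheory

/-- `μ = (R - √(R²-4))/2`. -/
noncomputable def mu (R : ℝ) : ℝ := (R - Real.sqrt (R ^ 2 - 4)) / 2

/-- The Möbius transformation `λ(z) = (z - μ)/(μz - 1)`. -/
noncomputable def lam (R : ℝ) (z : ℂ) : ℂ := (z - (mu R : ℂ)) / ((mu R : ℂ) * z - 1)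

/-- The shifted Zhukovsky-type map `ψ(w) = Rw - 1 + 1/(Rw - 1)`. -/
noncomputable def psi (R : ℝ) (w : ℂ) : ℂ := (R : ℂ) * w - 1 + ((R : ℂ) * w - 1)⁻¹

/-- `χ(t) = t ∑_{k ∈ ℤ} μ^{4k} exp((μ - 1/μ) μ^{4k} t)`. -/
noncomputable def chi (R : ℝ) (t : ℂ) : ℂ :=
  t * ∑' k : ℤ, (mu R : ℂ) ^ (4 * k) *
    Complex.exp (((mu R : ℂ) - (mu R : ℂ)⁻¹) * (mu R : ℂ) ^ (4 * k) * t)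

/-- The region `D = {t : |t - 1/R| < 1/R, Re t > Rμ²/2}`. -/
def Dset (R : ℝ) : Set ℂ :=
  {t | ‖t - 1 / (R : ℂ)‖ < 1 / R ∧ R * (mu R) ^ 2 / 2 < t.re}

/-- The region `𝔇 = {w : |w - R/(R²-1)| > 1/(R²-1), |w| < 1}`. -/
def frakD (R : ℝ) : Set ℂ :=
  {w | 1 / (R ^ 2 - 1) < ‖w - (R : ℂ) / (((R : ℝ) ^ 2 - 1 : ℝ) : ℂ)‖ ∧
    ‖w‖ < 1}

/-- The orthogonality domain `G₁ = ψ(𝔇)`. -/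
noncomputable def G1 (R : ℝ) : Set ℂ := psi R '' frakD R

/-- `p` is the sequence of Carleman (Bergman) orthonormal polynomials of `G₁`:
`p n` has degree `n`, real positive leading coefficient, and
`(1/π) ∫_{G₁} pₙ conj(pₘ) dA = δ_{n,m}`. -/
def IsCarleman (R : ℝ) (p : ℕ → Polynomial ℂ) : Prop :=
  (∀ n, (p n).natDegree = n) ∧
  (∀ n, 0 < (p n).leadingCoeff.re ∧ (p n).leadingCoeff.im = 0) ∧
  (∀ n m, ∫ z in G1 R, (p n).eval z * (starRingEnd ℂ) ((p m).eval z) =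
      if n = m then (Real.pi : ℂ) else 0)

/-- The limit functions `f_q` of Theorem 1.1. -/
noncomputable def fq (R q : ℝ) (t : ℂ) : ℂ :=
  (1 - (mu R : ℂ) * t) ^ 2 * (1 - (mu R : ℂ) ^ 3 / t) ^ 2 / ((1 - (mu R : ℂ) ^ 4) * R) *
    ((chi R ((((mu R) ^ (4 * q) : ℝ) : ℂ) * t) -
        chi R ((((mu R) ^ (4 * q + 2) : ℝ) : ℂ) / t)) /
      (t - (mu R : ℂ) ^ 2 / t))

/-- `Gₙ(t) = μ^{-n} λ(t)ⁿ λ'(t)`. -/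
noncomputable def Gfun (R : ℝ) (n : ℕ) (t : ℂ) : ℂ :=
  ((mu R : ℂ) ^ n)⁻¹ * (lam R t) ^ n * deriv (lam R) t

/-- The weight `μ^{-4⟨log_{μ⁴}(s/γ)⟩}`. -/
noncomputable def wgt (R γ s : ℝ) : ℝ :=
  mu R ^ (-(4 * Int.fract (Real.logb (mu R ^ 4) (s / γ))))

/-- The integrand `μ^{-4⟨log_{μ⁴}(s/γ)⟩} · s · e^{(μ - 1/μ)ts}`. -/
noncomputable def integrand14 (R γ : ℝ) (t : ℂ) (s : ℝ) : ℂ :=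
  (wgt R γ s : ℂ) * (s : ℂ) * Complex.exp (((mu R - (mu R)⁻¹ : ℝ) : ℂ) * t * (s : ℂ))

lemma mu_pos {R : ℝ} (hR : 2 < R) : 0 < mu R := by
  have hsq : Real.sqrt (R ^ 2 - 4) < R :=
    (Real.sqrt_lt' (by linarith)).mpr (by linarith)
  unfold mu; linarith

lemma mu_lt_one {R : ℝ} (hR : 2 < R) : mu R < 1 := by
  have hsq : R - 2 < Real.sqrt (R ^ 2 - 4) :=
    (Real.lt_sqrt (by linarith)).mpr (by nlinarith)
  unfold mu; linarith

/-- For `0 < b < 1`, this rounds `s > 0` up to the grid `γ b^ℤ`. -/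
noncomputable def geomCeil (b γ s : ℝ) : ℝ := γ * b ^ ⌊Real.logb b (s / γ)⌋

section GeometricCells

variable {b γ s : ℝ}

lemma floor_logb_div_eq_iff (hb0 : 0 < b) (hb1 : b < 1) (hγ : 0 < γ) (hs : 0 < s) (k : ℤ) :
    ⌊Real.logb b (s / γ)⌋ = k ↔ s ∈ Ioc (γ * b ^ (k + 1)) (γ * b ^ k) := by
  have hsγ : 0 < s / γ := div_pos hs hγ
  rw [Int.floor_eq_iff, Real.le_logb_iff_rpow_le_of_base_lt_one hb0 hb1 hsγ,
    Real.logb_lt_iff_lt_rpow_of_base_lt_one hb0 hb1 hsγ, div_le_iff₀ hγ, lt_div_iff₀ hγ,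
    ← Real.rpow_intCast, ← Real.rpow_intCast, Int.cast_add, Int.cast_one, mem_Ioc]
  constructor <;> rintro ⟨h1, h2⟩ <;> constructor <;> linarith

lemma iUnion_Ioc_zpow_eq_Ioi (hb0 : 0 < b) (hb1 : b < 1) (hγ : 0 < γ) :
    ⋃ k : ℤ, Ioc (γ * b ^ (k + 1)) (γ * b ^ k) = Ioi 0 := by
  ext s
  simp only [mem_iUnion, mem_Ioi]
  constructor
  · rintro ⟨k, hk, -⟩
    exact lt_trans (by positivity) hk
  · intro hs
    exact ⟨_, (floor_logb_div_eq_iff hb0 hb1 hγ hs _).mp rfl⟩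

lemma pairwise_disjoint_Ioc_zpow (hb0 : 0 < b) (hb1 : b < 1) (hγ : 0 < γ) :
    Pairwise (Function.onFun Disjoint fun k : ℤ => Ioc (γ * b ^ (k + 1)) (γ * b ^ k)) := by
  intro j k hjk
  refine Set.disjoint_left.mpr fun s hsj hsk => hjk ?_
  have hs : 0 < s := lt_trans (by positivity) hsj.1
  rw [← (floor_logb_div_eq_iff hb0 hb1 hγ hs j).mpr hsj,
    ← (floor_logb_div_eq_iff hb0 hb1 hγ hs k).mpr hsk]

lemma geomCeil_eq_of_mem_Ioc (hb0 : 0 < b) (hb1 : b < 1) (hγ : 0 < γ) {k : ℤ}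
    (hs : s ∈ Ioc (γ * b ^ (k + 1)) (γ * b ^ k)) : geomCeil b γ s = γ * b ^ k := by
  have hs0 : 0 < s := lt_trans (by positivity) hs.1
  rw [geomCeil, (floor_logb_div_eq_iff hb0 hb1 hγ hs0 k).mpr hs]

lemma geomCeil_le (hb0 : 0 < b) (hb1 : b < 1) (hγ : 0 < γ) (hs : 0 < s) :
    geomCeil b γ s ≤ b⁻¹ * s := by
  obtain ⟨hlo, -⟩ := (floor_logb_div_eq_iff hb0 hb1 hγ hs _).mp rfl
  rw [zpow_add_one₀ hb0.ne'] at hlo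
  rw [geomCeil, le_inv_mul_iff₀ hb0]
  linarith

end GeometricCells

noncomputable def geomExpTerm (b γ : ℝ) (c : ℂ) (k : ℤ) : ℂ :=
  ((γ * b ^ k : ℝ) : ℂ) * Complex.exp (c * (γ * b ^ k : ℝ))

section GeometricStepIntegral

variable {b γ : ℝ} {c : ℂ}

lemma mul_exp_le_two_div {a x : ℝ} (ha : a < 0) (hx : 0 < x) :
    x * Real.exp (a * x) ≤ 2 / (a ^ 2 * x) := by
  have hquad : (-a * x) ^ 2 / 2 ≤ Real.exp (-a * x) := by
    nlinarith [Real.quadratic_le_exp_of_nonneg (by nlinarith : 0 ≤ -a * x)]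
  have hexp : Real.exp (a * x) = (Real.exp (-a * x))⁻¹ := by
    rw [← Real.exp_neg]; ring_nf
  rw [hexp, ← div_eq_mul_inv, div_le_div_iff₀ (Real.exp_pos _) (mul_pos (by nlinarith) hx)]
  nlinarith

lemma summable_zpow_mul_exp {a : ℝ} (hb0 : 0 < b) (hb1 : b < 1) (hγ : 0 < γ) (ha : a < 0) :
    Summable fun k : ℤ => γ * b ^ k * Real.exp (a * (γ * b ^ k)) := by
  have hgeom := summable_geometric_of_lt_one hb0.le hb1
  apply Summable.of_nat_of_neg
  · refine Summable.of_nonneg_of_le (fun n => by positivity) (fun n => ?_) (hgeom.mul_left γ)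
    have hexp : Real.exp (a * (γ * b ^ n)) ≤ 1 :=
      Real.exp_le_one_iff.mpr (mul_nonpos_of_nonpos_of_nonneg ha.le (by positivity))
    simpa only [zpow_natCast, mul_one] using
      mul_le_mul_of_nonneg_left hexp (by positivity : 0 ≤ γ * b ^ n)
  · refine Summable.of_nonneg_of_le (fun n => by positivity) (fun n => ?_)
      (hgeom.mul_left (2 / (a ^ 2 * γ)))
    calc γ * b ^ (-(n : ℤ)) * Real.exp (a * (γ * b ^ (-(n : ℤ))))
        ≤ 2 / (a ^ 2 * (γ * b ^ (-(n : ℤ)))) := mul_exp_le_two_div ha (by positivity)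
      _ = 2 / (a ^ 2 * γ) * b ^ n := by
        rw [zpow_neg, zpow_natCast]
        field_simp

lemma norm_ofReal_mul_exp (r s : ℝ) :
    ‖(r : ℂ) * Complex.exp (c * s)‖ = |r| * Real.exp (c.re * s) := by
  simp [Complex.norm_exp, Complex.mul_re]

lemma summable_geomExpTerm (hb0 : 0 < b) (hb1 : b < 1) (hγ : 0 < γ) (hc : c.re < 0) :
    Summable (geomExpTerm b γ c) := by
  refine Summable.of_norm ?_
  simp_rw [geomExpTerm, norm_ofReal_mul_exp]
  refine (summable_zpow_mul_exp hb0 hb1 hγ hc).congr fun k => ?_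
  rw [abs_of_pos (by positivity)]

lemma measurable_geomCeil : Measurable (geomCeil b γ) := by
  unfold geomCeil Real.logb
  fun_prop

lemma integrableOn_geomCeil_mul_exp (hb0 : 0 < b) (hb1 : b < 1) (hγ : 0 < γ) (hc : c.re < 0) :
    IntegrableOn (fun s : ℝ => (geomCeil b γ s : ℂ) * Complex.exp (c * s)) (Ioi 0) := by
  have hdom : IntegrableOn (fun s : ℝ => b⁻¹ * (s * Real.exp (c.re * s))) (Ioi 0) := by
    have hpow := integrableOn_rpow_mul_exp_neg_mul_rpow (s := 1) (p := 1) (by norm_num) one_pos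
      (neg_pos.mpr hc)
    exact IntegrableOn.congr_fun (hpow.const_mul b⁻¹) (fun s _ => by simp) measurableSet_Ioi
  have hmeas : Measurable fun s : ℝ => (geomCeil b γ s : ℂ) * Complex.exp (c * s) :=
    (Complex.measurable_ofReal.comp measurable_geomCeil).mul (by fun_prop)
  refine hdom.mono' hmeas.aestronglyMeasurable ?_
  rw [ae_restrict_iff' measurableSet_Ioi]
  refine ae_of_all _ fun s (hs : 0 < s) => ?_
  rw [norm_ofReal_mul_exp, abs_of_pos (by unfold geomCeil; positivity), ← mul_assoc]
  exact mul_le_mul_of_nonneg_right (geomCeil_le hb0 hb1 hγ hs) (Real.exp_pos _).le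

lemma integral_Ioc_geomCeil_mul_exp (hb0 : 0 < b) (hb1 : b < 1) (hγ : 0 < γ) (hc : c ≠ 0)
    (k : ℤ) :
    ∫ s in Ioc (γ * b ^ (k + 1)) (γ * b ^ k), (geomCeil b γ s : ℂ) * Complex.exp (c * s) =
      (geomExpTerm b γ c k - (b : ℂ)⁻¹ * geomExpTerm b γ c (k + 1)) / c := by
  have hle : γ * b ^ (k + 1) ≤ γ * b ^ k :=
    mul_le_mul_of_nonneg_left (zpow_le_zpow_right_of_le_one₀ hb0 hb1.le (by omega)) hγ.le
  rw [setIntegral_congr_fun measurableSet_Ioc fun s hs => by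
      rw [geomCeil_eq_of_mem_Ioc hb0 hb1 hγ hs],
    integral_const_mul, ← intervalIntegral.integral_of_le hle, integral_exp_mul_complex hc]
  have hb : (b : ℂ) ≠ 0 := Complex.ofReal_ne_zero.mpr hb0.ne'
  simp only [geomExpTerm, zpow_add_one₀ hb0.ne']
  push_cast
  field_simp

lemma integral_geomCeil_mul_exp (hb0 : 0 < b) (hb1 : b < 1) (hγ : 0 < γ) (hc : c.re < 0) :
    ∫ s in Ioi 0, (geomCeil b γ s : ℂ) * Complex.exp (c * s) =
      (1 - (b : ℂ)⁻¹) / c * ∑' k : ℤ, geomExpTerm b γ c k := by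
  set g := geomExpTerm b γ c
  have hg : Summable g := summable_geomExpTerm hb0 hb1 hγ hc
  have hc0 : c ≠ 0 := fun h => by simp [h] at hc
  have hint := integrableOn_geomCeil_mul_exp hb0 hb1 hγ hc
  rw [← iUnion_Ioc_zpow_eq_Ioi hb0 hb1 hγ] at hint ⊢
  rw [integral_iUnion (fun k => measurableSet_Ioc) (pairwise_disjoint_Ioc_zpow hb0 hb1 hγ) hint,
    tsum_congr (integral_Ioc_geomCeil_mul_exp hb0 hb1 hγ hc0)]
  have hshift : Summable fun k => g (k + 1) := (Equiv.addRight (1 : ℤ)).summable_iff.mpr hg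
  have hshift_tsum : ∑' k, g (k + 1) = ∑' k, g k := (Equiv.addRight (1 : ℤ)).tsum_eq g
  rw [tsum_div_const, hg.tsum_sub (hshift.mul_left _), tsum_mul_left, hshift_tsum]
  ring

end GeometricStepIntegral

lemma rpow_neg_fract_logb_mul {b x : ℝ} (hb0 : 0 < b) (hb1 : b ≠ 1) (hx : 0 < x) :
    b ^ (-Int.fract (Real.logb b x)) * x = b ^ ⌊Real.logb b x⌋ := by
  rw [Int.fract, neg_sub, Real.rpow_sub hb0, Real.rpow_logb hb0 hb1 hx, Real.rpow_intCast]
  field_simp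

lemma wgt_mul_eq_geomCeil {R γ s : ℝ} (hR : 2 < R) (hγ : 0 < γ) (hs : 0 < s) :
    wgt R γ s * s = geomCeil (mu R ^ 4) γ s := by
  have hm := mu_pos hR
  have hb1 : mu R ^ 4 ≠ 1 := (pow_lt_one₀ hm.le (mu_lt_one hR) (by norm_num)).ne
  have hpow : mu R ^ (-(4 * Int.fract (Real.logb (mu R ^ 4) (s / γ)))) =
      (mu R ^ 4) ^ (-Int.fract (Real.logb (mu R ^ 4) (s / γ))) := by
    rw [← mul_neg, Real.rpow_mul hm.le, Real.rpow_ofNat]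
  rw [wgt, hpow, geomCeil, ← rpow_neg_fract_logb_mul (by positivity) hb1 (div_pos hs hγ)]
  field_simp

lemma chi_mul_eq_tsum {R γ : ℝ} (hγ : γ ≠ 0) (t : ℂ) :
    chi R (γ * t) =
      t * ∑' k : ℤ, geomExpTerm (mu R ^ 4) γ (((mu R - (mu R)⁻¹ : ℝ) : ℂ) * t) k := by
  have hγ' : (γ : ℂ) ≠ 0 := Complex.ofReal_ne_zero.mpr hγ
  have hterm : ∀ k : ℤ, (mu R : ℂ) ^ (4 * k) *
      Complex.exp (((mu R : ℂ) - (mu R : ℂ)⁻¹) * (mu R : ℂ) ^ (4 * k) * (γ * t)) =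
      (γ : ℂ)⁻¹ * geomExpTerm (mu R ^ 4) γ (((mu R - (mu R)⁻¹ : ℝ) : ℂ) * t) k := by
    intro k
    rw [geomExpTerm, zpow_mul]
    push_cast
    field_simp
  rw [chi, tsum_congr hterm, tsum_mul_left, mul_comm (γ : ℂ) t, mul_assoc,
    mul_inv_cancel_left₀ hγ']

lemma cube_mul_sq_div_one_add_sq_mul_eq {m : ℝ} (hm0 : 0 < m) (hm1 : m < 1) {t : ℂ}
    (ht : t ≠ 0) :
    (m : ℂ) ^ 3 * t ^ 2 / (1 + (m : ℂ) ^ 2) *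
      ((1 - ((m ^ 4 : ℝ) : ℂ)⁻¹) / (((m - m⁻¹ : ℝ) : ℂ) * t)) = t := by
  have hm : (m : ℂ) ≠ 0 := Complex.ofReal_ne_zero.mpr hm0.ne'
  have hsq_sub : (m : ℂ) ^ 2 - 1 ≠ 0 := by
    norm_cast
    nlinarith
  have hsq_add : 1 + (m : ℂ) ^ 2 ≠ 0 := by
    norm_cast
    positivity
  push_cast
  field_simp
  ring

/-- Integral representation (3.5) of `χ`: for `Re t > 0` and `γ > 0`, the integral
converges and `χ(γt) = (μ³t²/(1+μ²)) ∫₀^∞ μ^{-4⟨log_{μ⁴}(s/γ)⟩} s e^{(μ-1/μ)ts} ds`. -/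
theorem stmt_14 (R : ℝ) (hR : 2 < R) (t : ℂ) (ht : 0 < t.re) (γ : ℝ) (hγ : 0 < γ) :
    MeasureTheory.IntegrableOn (integrand14 R γ t) (Set.Ioi 0) ∧
    chi R ((γ : ℂ) * t) =
      (mu R : ℂ) ^ 3 * t ^ 2 / (1 + (mu R : ℂ) ^ 2) *
        ∫ s in Set.Ioi (0 : ℝ), integrand14 R γ t s := by
  have hm0 : 0 < mu R := mu_pos hR
  have hm1 : mu R < 1 := mu_lt_one hR
  have hb0 : 0 < mu R ^ 4 := by positivity
  have hb1 : mu R ^ 4 < 1 := pow_lt_one₀ hm0.le hm1 (by norm_num)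
  set c : ℂ := ((mu R - (mu R)⁻¹ : ℝ) : ℂ) * t
  have hc : c.re < 0 := by
    have : mu R - (mu R)⁻¹ < 0 := sub_neg.mpr (hm1.trans (one_lt_inv₀ hm0 |>.mpr hm1))
    simpa [c] using mul_neg_of_neg_of_pos this ht
  have hstep : EqOn (integrand14 R γ t)
      (fun s => (geomCeil (mu R ^ 4) γ s : ℂ) * Complex.exp (c * s)) (Ioi 0) := by
    intro s (hs : 0 < s)
    beta_reduce
    rw [integrand14, ← wgt_mul_eq_geomCeil hR hγ hs, Complex.ofReal_mul]
  refine ⟨(integrableOn_geomCeil_mul_exp hb0 hb1 hγ hc).congr_fun hstep.symm measurableSet_Ioi,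
    ?_⟩
  rw [setIntegral_congr_fun measurableSet_Ioi hstep, integral_geomCeil_mul_exp hb0 hb1 hγ hc,
    chi_mul_eq_tsum hγ.ne']
  have ht0 : t ≠ 0 := fun h => by simp [h] at ht
  rw [← mul_assoc, cube_mul_sq_div_one_add_sq_mul_eq hm0 hm1 ht0]
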